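/- arXiv:2603.21683 — 2 statements merged into one kernel-verified Lean document; each statement's English description precedes it below -/
import Mathlib

section
/- Let λ be the Lebesgue (uniform) probability measure on I = [0,1], let ν be a non-atomic Borel probability measure on ℝ^d, and let (μ^u)_{u ∈ I} be a measurable family of Borel probability measures on ℝ^d (i.e., a Markov kernel from I to ℝ^d) satisfying ∫_I ∫_{ℝ^d} |x|² μ^u(dx) λ(du) < ∞. Then there exists a jointly measurable map T : I × ℝ^d → ℝ^d such that T(u,·)♯ν = μ^u for λ-a.e. u ∈ I, and T is square-integrable with respect to λ ⊗ ν, i.e. ∫_I ∫_{ℝ^d} |T(u,x)|² ν(dx) λ(du) < ∞. -/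
/-!
The quantile function of a probability measure `μ` on `ℝ` pushes the uniform measure on `(0,1)`
forward to `μ`; when `μ` has no atoms its cdf is continuous and is a left inverse of the quantile
function on `(0,1)`, so the cdf pushes `μ` forward to the uniform measure. Transported through a
Borel embedding of `ℝ^d` into `ℝ`, this gives a measurable `S : ℝ^d → [0,1]` with `S♯ν` uniform.
A Markov kernel `κ` into a standard Borel space is `u ↦ (f u)♯(uniform)` for a jointly
measurable `f` (`Kernel.exists_measurable_map_eq_unitInterval`), so `T (u, x) = f u (S x)`
works, and by Fubini its second moment is that of `κ`.
-/

open MeasureTheory ProbabilityTheory Set Filter Topology unitInterval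
open scoped ENNReal

namespace ProbabilityTheory

/-- Meaningful only for `t ∈ (0,1)`: otherwise the set is empty or unbounded below. -/
noncomputable def quantile (μ : Measure ℝ) (t : ℝ) : ℝ :=
  sInf {x | t ≤ cdf μ x}

section Quantile

variable {μ : Measure ℝ} {t : ℝ}

theorem quantile_le_iff (ht : t ∈ Ioo 0 1) {x : ℝ} : quantile μ t ≤ x ↔ t ≤ cdf μ x := by
  obtain ⟨x₀, hx₀⟩ := ((tendsto_cdf_atBot μ).eventually_lt_const ht.1).exists
  obtain ⟨x₁, hx₁⟩ := ((tendsto_cdf_atTop μ).eventually_const_lt ht.2).exists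
  have hne : {x | t ≤ cdf μ x}.Nonempty := ⟨x₁, hx₁.le⟩
  have hbdd : BddBelow {x | t ≤ cdf μ x} :=
    ⟨x₀, fun y hy => ((monotone_cdf μ).reflect_lt (hx₀.trans_le hy)).le⟩
  have le_cdf_quantile : t ≤ cdf μ (quantile μ t) := by
    refine ge_of_tendsto (((cdf μ).right_continuous _).mono_left
      (nhdsWithin_mono _ Ioi_subset_Ici_self)) (eventually_nhdsWithin_of_forall fun y hy => ?_)
    obtain ⟨s, hs, hsy⟩ := exists_lt_of_csInf_lt hne hy
    exact hs.trans (monotone_cdf μ hsy.le)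
  exact ⟨fun h => le_cdf_quantile.trans (monotone_cdf μ h), fun h => csInf_le hbdd h⟩

theorem monotoneOn_quantile : MonotoneOn (quantile μ) (Ioo 0 1) := fun _ hs _ ht hst =>
  (quantile_le_iff hs).2 (hst.trans ((quantile_le_iff ht).1 le_rfl))

theorem aemeasurable_quantile : AEMeasurable (quantile μ) (volume.restrict (Ioo 0 1)) :=
  aemeasurable_restrict_of_monotoneOn measurableSet_Ioo monotoneOn_quantile

theorem map_quantile [IsProbabilityMeasure μ] :
    (volume.restrict (Ioo (0 : ℝ) 1)).map (quantile μ) = μ := by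
  refine (Measure.ext_of_Iic μ _ fun c => ?_).symm
  rw [Measure.map_apply_of_aemeasurable aemeasurable_quantile measurableSet_Iic,
    Measure.restrict_apply' measurableSet_Ioo, ← ofReal_cdf]
  have hpre : quantile μ ⁻¹' Iic c ∩ Ioo 0 1 = Iic (cdf μ c) ∩ Ioo 0 1 := by
    ext t
    simp only [mem_inter_iff, mem_preimage, mem_Iic, and_congr_left_iff]
    exact fun ht => quantile_le_iff ht
  rw [hpre]
  refine le_antisymm ?_ ?_
  · calc ENNReal.ofReal (cdf μ c) = volume (Ioo 0 (cdf μ c)) := by rw [Real.volume_Ioo, sub_zero]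
      _ ≤ volume (Iic (cdf μ c) ∩ Ioo 0 1) :=
        measure_mono fun t ht => ⟨ht.2.le, ht.1, ht.2.trans_le (cdf_le_one μ c)⟩
  · calc volume (Iic (cdf μ c) ∩ Ioo 0 1) ≤ volume (Ioc 0 (cdf μ c)) :=
        measure_mono fun t ht => ⟨ht.2.1, ht.1⟩
      _ = ENNReal.ofReal (cdf μ c) := by rw [Real.volume_Ioc, sub_zero]

variable [IsProbabilityMeasure μ] [NullSingletonClass μ]

theorem leftLim_cdf (x : ℝ) : Function.leftLim (cdf μ) x = cdf μ x := by
  have h := (cdf μ).measure_singleton x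
  rw [measure_cdf, measure_singleton, eq_comm, ENNReal.ofReal_eq_zero] at h
  exact le_antisymm ((monotone_cdf μ).leftLim_le le_rfl) (sub_nonpos.1 h)

theorem cdf_quantile (ht : t ∈ Ioo 0 1) : cdf μ (quantile μ t) = t := by
  refine le_antisymm ?_ ((quantile_le_iff ht).1 le_rfl)
  rw [← leftLim_cdf]
  refine le_of_tendsto ((monotone_cdf μ).tendsto_leftLim _)
    (eventually_nhdsWithin_of_forall fun x hx => ?_)
  exact (not_le.1 ((quantile_le_iff ht).not.1 (not_le.2 hx))).le

theorem map_cdf : μ.map (cdf μ) = volume.restrict (Ioo 0 1) :=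
  calc μ.map (cdf μ) = ((volume.restrict (Ioo 0 1)).map (quantile μ)).map (cdf μ) := by
        rw [map_quantile]
    _ = (volume.restrict (Ioo 0 1)).map (cdf μ ∘ quantile μ) :=
        AEMeasurable.map_map_of_aemeasurable (cdf μ).mono.measurable.aemeasurable
          aemeasurable_quantile
    _ = (volume.restrict (Ioo 0 1)).map id :=
        Measure.map_congr (ae_restrict_of_forall_mem measurableSet_Ioo fun _ => cdf_quantile)
    _ = volume.restrict (Ioo 0 1) := Measure.map_id

end Quantile

end ProbabilityTheory

theorem MeasurableEmbedding.nullSingletonClass_map {X Y : Type*}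
    [MeasurableSpace X] [MeasurableSpace Y] {f : X → Y} (hf : MeasurableEmbedding f)
    (μ : Measure X) [NullSingletonClass μ] : NullSingletonClass (μ.map f) :=
  ⟨fun y => by
    rw [hf.map_apply]
    exact (subsingleton_singleton.preimage hf.injective).measure_zero μ⟩

theorem MeasureTheory.Measure.exists_measurable_map_eq_volume_unitInterval {X : Type*}
    [MeasurableSpace X] [StandardBorelSpace X] (ν : Measure X) [IsProbabilityMeasure ν]
    [NullSingletonClass ν] :
    ∃ S : X → I, Measurable S ∧ ν.map S = volume := by
  have he := measurableEmbedding_embeddingReal X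
  have : IsProbabilityMeasure (ν.map (embeddingReal X)) :=
    Measure.isProbabilityMeasure_map he.measurable.aemeasurable
  have := he.nullSingletonClass_map ν
  let F := cdf (ν.map (embeddingReal X))
  let S : X → I := fun x => ⟨F (embeddingReal X x), cdf_nonneg _ _, cdf_le_one _ _⟩
  have hS : Measurable S := (F.mono.measurable.comp he.measurable).subtype_mk
  refine ⟨S, hS, measurableEmbedding_coe.map_injective ?_⟩
  rw [Measure.map_map measurable_subtype_coe hS, measurePreserving_coe.map_eq,
    ← Measure.restrict_congr_set Ioo_ae_eq_Icc, ← map_cdf (μ := ν.map (embeddingReal X)),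
    Measure.map_map F.mono.measurable he.measurable]
  rfl

theorem ProbabilityTheory.Kernel.exists_measurable_map_eq_of_nullSingletonClass
    {X Y Z : Type*} [MeasurableSpace X] [MeasurableSpace Y] [StandardBorelSpace Y] [Nonempty Y]
    [MeasurableSpace Z] [StandardBorelSpace Z]
    (ν : Measure Z) [IsProbabilityMeasure ν] [NullSingletonClass ν]
    (κ : Kernel X Y) [IsMarkovKernel κ] :
    ∃ T : X × Z → Y, Measurable T ∧ ∀ a, ν.map (fun z => T (a, z)) = κ a := by
  obtain ⟨S, hS, hSν⟩ := ν.exists_measurable_map_eq_volume_unitInterval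
  obtain ⟨f, hf, hfκ⟩ := κ.exists_measurable_map_eq_unitInterval
  refine ⟨fun p => f p.1 (S p.2), hf.comp (measurable_fst.prodMk (hS.comp measurable_snd)),
    fun a => ?_⟩
  rw [← hfκ, ← hSν, Measure.map_map hf.of_uncurry_left hS]
  rfl

theorem MeasureTheory.lintegral_prod_comp_of_map_eq {X Y Z : Type*} [MeasurableSpace X]
    [MeasurableSpace Y] [MeasurableSpace Z] {T : X × Z → Y} (hT : Measurable T)
    {ν : Measure Z} [SFinite ν] {μ : X → Measure Y} (hTμ : ∀ a, ν.map (fun z => T (a, z)) = μ a)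
    (m : Measure X) {g : Y → ℝ≥0∞} (hg : Measurable g) :
    ∫⁻ p, g (T p) ∂(m.prod ν) = ∫⁻ a, ∫⁻ y, g y ∂(μ a) ∂m := by
  rw [lintegral_prod (fun p => g (T p)) (hg.comp hT).aemeasurable]
  refine lintegral_congr fun a => ?_
  rw [← hTμ a, lintegral_map hg (by fun_prop)]

/-- Sampling lemma on `M_λ`: given the uniform measure `λ` on `I = [0,1]`, a non-atomic
Borel probability measure `ν` on `ℝ^d`, and a Markov kernel `u ↦ μ^u` from `I` to `ℝ^d`
with `∫_I ∫ |x|² μ^u(dx) λ(du) < ∞`, there is a jointly measurable map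
`T : I × ℝ^d → ℝ^d`, square-integrable for `λ ⊗ ν`, with `T(u,·)♯ν = μ^u` for
`λ`-a.e. `u`. -/
theorem exists_measurable_transport_of_kernel {d : ℕ}
    (ν : Measure (EuclideanSpace ℝ (Fin d))) [IsProbabilityMeasure ν] [NullSingletonClass ν]
    (κ : Kernel (Set.Icc (0:ℝ) 1) (EuclideanSpace ℝ (Fin d))) [IsMarkovKernel κ]
    (hκ : ∫⁻ u, ∫⁻ x, ‖x‖₊ ^ 2 ∂(κ u) ∂(volume : Measure (Set.Icc (0:ℝ) 1)) < ⊤) :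
    ∃ T : (Set.Icc (0:ℝ) 1) × (EuclideanSpace ℝ (Fin d)) → EuclideanSpace ℝ (Fin d),
      Measurable T ∧
      (∀ᵐ u ∂(volume : Measure (Set.Icc (0:ℝ) 1)),
        ν.map (fun x => T (u, x)) = κ u) ∧
      ∫⁻ p, ‖T p‖₊ ^ 2 ∂((volume : Measure (Set.Icc (0:ℝ) 1)).prod ν) < ⊤ := by
  obtain ⟨T, hT, hTκ⟩ := κ.exists_measurable_map_eq_of_nullSingletonClass ν
  refine ⟨T, hT, .of_forall hTκ, ?_⟩
  rwa [lintegral_prod_comp_of_map_eq hT hTκ _ (g := fun y => (‖y‖₊ : ℝ≥0∞) ^ 2) (by fun_prop)]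
end

section
/- Let T > 0, B ∈ ℝ^{d×d}, C ∈ ℝ^{d×m}, N ∈ ℝ^{m×m} symmetric positive definite, and H ∈ ℝ^{d×d} symmetric positive semidefinite. Then there exists a unique continuously differentiable map K : [0,T] → ℝ^{d×d} taking values in symmetric matrices such that K(T) = H and K'(t) + Bᵀ K(t) + K(t) B − K(t) C N⁻¹ Cᵀ K(t) = 0 for all t ∈ [0,T]. Moreover, K(t) is positive semidefinite for every t ∈ [0,T]. -/
/-!
The solution is explicit. With `Φ(t) = exp((T - t) B)` and the Gramian
`G(t) = ∫_t^T Φ(s) S Φ(s)ᵀ ds`, where `S = C N⁻¹ Cᵀ`, put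
`K(t) = Φ(t)ᵀ H (1 + G(t) H)⁻¹ Φ(t)`.
The middle factor `P = H (1 + G H)⁻¹` solves the drift-free equation `P' = P (Φ S Φᵀ) P`
(when `H` is invertible, `P⁻¹ = H⁻¹ + G` has derivative `-Φ S Φᵀ`), and conjugating by the
fundamental solutions `Φᵀ`, `Φ` produces the drift terms `-Bᵀ K - K B`.
Since `G` and `H` are positive semidefinite, `1 + G H` is invertible and
`H (1 + G H)⁻¹ = (1 + G H)⁻ᵀ (H + H G H) (1 + G H)⁻¹` is positive semidefinite, so `K` is defined
and positive semidefinite on all of `[0, T]`.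
Uniqueness holds because the Riccati vector field is polynomial, hence locally Lipschitz, so
Grönwall's inequality applies to two solutions on the compact set their trajectories sweep out.
-/

open Matrix Set NormedSpace MeasureTheory

attribute [local instance] Matrix.frobeniusNormedAddCommGroup Matrix.frobeniusNormedSpace
  Matrix.frobeniusNormedRing Matrix.frobeniusNormedAlgebra

theorem ODE_solution_unique_Icc_left_of_locallyLipschitz {E : Type*} [NormedAddCommGroup E]
    [NormedSpace ℝ E] {v : E → E} (hv : LocallyLipschitz v) {f g : ℝ → E} {a b : ℝ}
    (hf : ∀ t ∈ Icc a b, HasDerivWithinAt f (v (f t)) (Icc a b) t)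
    (hg : ∀ t ∈ Icc a b, HasDerivWithinAt g (v (g t)) (Icc a b) t)
    (hb : f b = g b) : EqOn f g (Icc a b) := by
  have hfc : ContinuousOn f (Icc a b) := fun t ht => (hf t ht).continuousWithinAt
  have hgc : ContinuousOn g (Icc a b) := fun t ht => (hg t ht).continuousWithinAt
  obtain ⟨L, hL⟩ := hv.locallyLipschitzOn.exists_lipschitzOnWith_of_compact
    ((isCompact_Icc.image_of_continuousOn hfc).union (isCompact_Icc.image_of_continuousOn hgc))
  have hleft {h : ℝ → E} (hh : ∀ t ∈ Icc a b, HasDerivWithinAt h (v (h t)) (Icc a b) t) :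
      ∀ t ∈ Ioc a b, HasDerivWithinAt h (v (h t)) (Iic t) t := fun t ht =>
    (hh t (Ioc_subset_Icc_self ht)).mono_of_mem_nhdsWithin (Icc_mem_nhdsLE_of_mem ht)
  exact ODE_solution_unique_of_mem_Icc_left (v := fun _ => v) (fun _ _ => hL)
    hfc (hleft hf) (fun t ht => .inl (mem_image_of_mem f (Ioc_subset_Icc_self ht)))
    hgc (hleft hg) (fun t ht => .inr (mem_image_of_mem g (Ioc_subset_Icc_self ht))) hb

section NormedAlgebra

variable {R : Type*} [NormedRing R] [NormedAlgebra ℝ R]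

theorem riccati_eqOn_Icc_of_eq_right (A B S : R) {K₁ K₁' K₂ K₂' : ℝ → R} {a b : ℝ}
    (hK₁ : ∀ t ∈ Icc a b, HasDerivWithinAt K₁ (K₁' t) (Icc a b) t)
    (hK₁' : ∀ t ∈ Icc a b, K₁' t + A * K₁ t + K₁ t * B - K₁ t * S * K₁ t = 0)
    (hK₂ : ∀ t ∈ Icc a b, HasDerivWithinAt K₂ (K₂' t) (Icc a b) t)
    (hK₂' : ∀ t ∈ Icc a b, K₂' t + A * K₂ t + K₂ t * B - K₂ t * S * K₂ t = 0)
    (hb : K₁ b = K₂ b) : EqOn K₁ K₂ (Icc a b) := by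
  have hv : LocallyLipschitz (fun X : R => X * S * X - A * X - X * B) :=
    ContDiff.locallyLipschitz (show ContDiff ℝ 1 _ by fun_prop)
  have hsol {K K' : ℝ → R} (hK : ∀ t ∈ Icc a b, HasDerivWithinAt K (K' t) (Icc a b) t)
      (hK' : ∀ t ∈ Icc a b, K' t + A * K t + K t * B - K t * S * K t = 0) (t : ℝ)
      (ht : t ∈ Icc a b) :
      HasDerivWithinAt K (K t * S * K t - A * K t - K t * B) (Icc a b) t :=
    (hK t ht).congr_deriv (eq_of_sub_eq_zero (by rw [← hK' t ht]; abel))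
  exact ODE_solution_unique_Icc_left_of_locallyLipschitz hv (hsol hK₁ hK₁') (hsol hK₂ hK₂') hb

theorem hasDerivAt_exp_sub_smul [CompleteSpace R] (A : R) (T t : ℝ) :
    HasDerivAt (fun s : ℝ => exp ((T - s) • A)) (-(exp ((T - t) • A) * A)) t := by
  simpa [Function.comp_def] using
    (hasDerivAt_exp_smul_const A (T - t)).scomp t ((hasDerivAt_id t).const_sub T)

theorem hasDerivAt_exp_sub_smul' [CompleteSpace R] (A : R) (T t : ℝ) :
    HasDerivAt (fun s : ℝ => exp ((T - s) • A)) (-(A * exp ((T - t) • A))) t := by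
  simpa [Function.comp_def] using
    (hasDerivAt_exp_smul_const' A (T - t)).scomp t ((hasDerivAt_id t).const_sub T)

theorem HasDerivAt.ringInverse [CompleteSpace R] {W : ℝ → R} {W' : R} {t : ℝ}
    (hW : HasDerivAt W W' t) (hu : IsUnit (W t)) :
    HasDerivAt (fun s => Ring.inverse (W s))
      (-(Ring.inverse (W t) * W' * Ring.inverse (W t))) t := by
  obtain ⟨u, hu⟩ := hu
  have hinv := hasFDerivAt_ringInverse (𝕜 := ℝ) u
  rw [hu] at hinv
  simpa [← hu, Function.comp_def] using hinv.comp_hasDerivAt t hW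

theorem hasDerivAt_mul_inverse_one_add_mul [CompleteSpace R] {G : ℝ → R} {Q H : R} {t : ℝ}
    (hG : HasDerivAt G (-Q) t) (hu : IsUnit (1 + G t * H)) :
    HasDerivAt (fun s => H * Ring.inverse (1 + G s * H))
      (H * Ring.inverse (1 + G t * H) * Q * (H * Ring.inverse (1 + G t * H))) t :=
  ((((hG.mul_const H).const_add 1).ringInverse hu).const_mul H).congr_deriv (by noncomm_ring)

theorem hasDerivAt_mul_mul_of_riccati {Ψ P Φ : ℝ → R} {A B S : R} {t : ℝ}
    (hΨ : HasDerivAt Ψ (-(A * Ψ t)) t) (hP : HasDerivAt P (P t * (Φ t * S * Ψ t) * P t) t)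
    (hΦ : HasDerivAt Φ (-(Φ t * B)) t) :
    HasDerivAt (fun s => Ψ s * P s * Φ s)
      (Ψ t * P t * Φ t * S * (Ψ t * P t * Φ t) - A * (Ψ t * P t * Φ t) - Ψ t * P t * Φ t * B) t :=
  ((hΨ.mul hP).mul hΦ).congr_deriv (by simp only [Pi.mul_apply]; noncomm_ring)

end NormedAlgebra

namespace Matrix

variable {n : Type*} [Fintype n] [DecidableEq n]

theorem exp_smul_transpose (c : ℝ) (B : Matrix n n ℝ) : exp (c • Bᵀ) = (exp (c • B))ᴴ := by
  rw [conjTranspose_eq_transpose_of_trivial, ← transpose_smul, exp_transpose]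

theorem posSemidef_intervalIntegral {f : ℝ → Matrix n n ℝ} {a b : ℝ} (hab : a ≤ b)
    (hf : ContinuousOn f (Icc a b)) (hpsd : ∀ s ∈ Icc a b, (f s).PosSemidef) :
    (∫ s in a..b, f s).PosSemidef := by
  have hint := hf.intervalIntegrable_of_Icc (μ := volume) hab
  refine .of_dotProduct_mulVec_nonneg ?_ fun x => ?_
  · have htr : (∫ s in a..b, f s)ᵀ = ∫ s in a..b, (f s)ᵀ :=
      ((transposeLinearEquiv n n ℝ ℝ).toLinearMap.toContinuousLinearMap.intervalIntegral_comp_comm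
        hint).symm
    rw [isHermitian_iff_isSymm, IsSymm, htr]
    exact intervalIntegral.integral_congr fun s hs =>
      isHermitian_iff_isSymm.mp (hpsd s (uIcc_of_le hab ▸ hs)).isHermitian
  · let q : Matrix n n ℝ →ₗ[ℝ] ℝ := LinearMap.applyₗ x ∘ₗ LinearMap.applyₗ x ∘ₗ
      (toLinearMap₂' ℝ : Matrix n n ℝ ≃ₗ[ℝ] (n → ℝ) →ₗ[ℝ] (n → ℝ) →ₗ[ℝ] ℝ).toLinearMap
    have hq (M : Matrix n n ℝ) : q M = x ⬝ᵥ M *ᵥ x := toLinearMap₂'_apply' M x x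
    have hquad : q (∫ s in a..b, f s) = ∫ s in a..b, q (f s) :=
      (q.toContinuousLinearMap.intervalIntegral_comp_comm hint).symm
    rw [star_trivial, ← hq, hquad]
    exact intervalIntegral.integral_nonneg hab fun s hs => by
      simpa [hq] using (hpsd s hs).dotProduct_mulVec_nonneg x

theorem isUnit_one_add_mul_of_posSemidef {G H : Matrix n n ℝ} (hG : G.PosSemidef)
    (hH : H.PosSemidef) : IsUnit (1 + G * H) := by
  rw [isUnit_iff_isUnit_det, isUnit_iff_ne_zero, ne_eq, ← exists_mulVec_eq_zero_iff]
  rintro ⟨v, hv0, hv⟩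
  have hGHv : G *ᵥ (H *ᵥ v) = -v := by
    rw [add_mulVec, one_mulVec, ← mulVec_mulVec] at hv
    exact eq_neg_of_add_eq_zero_right hv
  -- `(Hv)ᵀ G (Hv) = -vᵀ H v`, and both quadratic forms are nonnegative.
  have hG' := hG.dotProduct_mulVec_nonneg (H *ᵥ v)
  have hH' := hH.dotProduct_mulVec_nonneg v
  rw [star_trivial, hGHv, dotProduct_neg, dotProduct_comm] at hG'
  rw [star_trivial] at hH'
  have hHv : H *ᵥ v = 0 := (hH.dotProduct_mulVec_zero_iff v).mp (by simp; linarith)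
  exact hv0 (by simpa [hHv] using hGHv.symm)

theorem mul_inv_one_add_mul_eq {G H : Matrix n n ℝ} (hG : Gᵀ = G) (hH : Hᵀ = H)
    (hW : IsUnit (1 + G * H)) :
    H * (1 + G * H)⁻¹ = ((1 + G * H)⁻¹)ᵀ * (H + H * G * H) * (1 + G * H)⁻¹ := by
  have hWH : (1 + G * H)ᵀ * H = H + H * G * H := by
    rw [transpose_add, transpose_one, transpose_mul, hG, hH]
    noncomm_ring
  calc H * (1 + G * H)⁻¹ = ((1 + G * H) * (1 + G * H)⁻¹)ᵀ * H * (1 + G * H)⁻¹ := by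
        rw [mul_nonsing_inv _ ((isUnit_iff_isUnit_det _).mp hW), transpose_one, one_mul]
    _ = ((1 + G * H)⁻¹)ᵀ * ((1 + G * H)ᵀ * H) * (1 + G * H)⁻¹ := by
        rw [transpose_mul]; noncomm_ring
    _ = _ := by rw [hWH]

theorem posSemidef_mul_inv_one_add_mul {G H : Matrix n n ℝ} (hG : G.PosSemidef)
    (hH : H.PosSemidef) : (H * (1 + G * H)⁻¹).PosSemidef := by
  have hGt : Gᵀ = G := isHermitian_iff_isSymm.mp hG.isHermitian
  have hHt : Hᵀ = H := isHermitian_iff_isSymm.mp hH.isHermitian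
  rw [mul_inv_one_add_mul_eq hGt hHt (isUnit_one_add_mul_of_posSemidef hG hH)]
  have hHGH : (H * G * H).PosSemidef := by
    simpa [conjTranspose_eq_transpose_of_trivial, hHt] using hG.conjTranspose_mul_mul_same H
  simpa [conjTranspose_eq_transpose_of_trivial] using
    (hH.add hHGH).conjTranspose_mul_mul_same (1 + G * H)⁻¹

end Matrix

namespace Riccati

variable {n : Type*} [Fintype n] [DecidableEq n]

noncomputable def gramian (T : ℝ) (B S : Matrix n n ℝ) (t : ℝ) : Matrix n n ℝ :=
  ∫ s in t..T, exp ((T - s) • B) * S * exp ((T - s) • Bᵀ)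

noncomputable def solution (T : ℝ) (B S H : Matrix n n ℝ) (t : ℝ) : Matrix n n ℝ :=
  exp ((T - t) • Bᵀ) * (H * (1 + gramian T B S t * H)⁻¹) * exp ((T - t) • B)

variable (T : ℝ) (B : Matrix n n ℝ) {S H : Matrix n n ℝ}

theorem continuous_gramian_integrand :
    Continuous fun s => exp ((T - s) • B) * S * exp ((T - s) • Bᵀ) := by
  fun_prop

theorem hasDerivAt_gramian (t : ℝ) :
    HasDerivAt (gramian T B S) (-(exp ((T - t) • B) * S * exp ((T - t) • Bᵀ))) t := by
  have hG : gramian T B S = fun u => -∫ s in T..u, exp ((T - s) • B) * S * exp ((T - s) • Bᵀ) :=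
    funext fun u => intervalIntegral.integral_symm _ _
  rw [hG]
  exact ((continuous_gramian_integrand T B).integral_hasStrictDerivAt T t).hasDerivAt.neg

theorem posSemidef_gramian (hS : S.PosSemidef) {t : ℝ} (ht : t ≤ T) :
    (gramian T B S t).PosSemidef :=
  posSemidef_intervalIntegral ht (continuous_gramian_integrand T B).continuousOn fun s _ => by
    simpa only [exp_smul_transpose] using hS.mul_mul_conjTranspose_same (exp ((T - s) • B))

theorem solution_self : solution T B S H T = H := by
  simp [solution, gramian]

theorem posSemidef_solution (hS : S.PosSemidef) (hH : H.PosSemidef) {t : ℝ} (ht : t ≤ T) :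
    (solution T B S H t).PosSemidef := by
  simpa only [solution, exp_smul_transpose] using
    (posSemidef_mul_inv_one_add_mul (posSemidef_gramian T B hS ht) hH).conjTranspose_mul_mul_same
      (exp ((T - t) • B))

theorem hasDerivAt_solution (hS : S.PosSemidef) (hH : H.PosSemidef) {t : ℝ} (ht : t ≤ T) :
    HasDerivAt (solution T B S H) (solution T B S H t * S * solution T B S H t -
      Bᵀ * solution T B S H t - solution T B S H t * B) t := by
  have hP := hasDerivAt_mul_inverse_one_add_mul (hasDerivAt_gramian T B t)
    (isUnit_one_add_mul_of_posSemidef (posSemidef_gramian T B hS ht) hH)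
  simp only [← nonsing_inv_eq_ringInverse] at hP
  exact hasDerivAt_mul_mul_of_riccati (hasDerivAt_exp_sub_smul' Bᵀ T t) hP
    (hasDerivAt_exp_sub_smul B T t)

end Riccati

theorem matrix_riccati_existence_uniqueness_general {d m : ℕ} (T : ℝ)
    (B : Matrix (Fin d) (Fin d) ℝ) (C : Matrix (Fin d) (Fin m) ℝ)
    (N : Matrix (Fin m) (Fin m) ℝ) (hN : N.PosDef)
    (H : Matrix (Fin d) (Fin d) ℝ) (hH : H.PosSemidef) :
    ∃ (K K' : ℝ → Matrix (Fin d) (Fin d) ℝ),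
      ((∀ t ∈ Icc (0:ℝ) T, HasDerivWithinAt K (K' t) (Icc (0:ℝ) T) t) ∧
        ContinuousOn K' (Icc (0:ℝ) T) ∧
        (∀ t ∈ Icc (0:ℝ) T, (K t).IsSymm) ∧
        K T = H ∧
        (∀ t ∈ Icc (0:ℝ) T,
          K' t + Bᵀ * K t + K t * B - K t * C * N⁻¹ * Cᵀ * K t = 0)) ∧
      (∀ t ∈ Icc (0:ℝ) T, (K t).PosSemidef) ∧
      (∀ K₂ K₂' : ℝ → Matrix (Fin d) (Fin d) ℝ,
        ((∀ t ∈ Icc (0:ℝ) T, HasDerivWithinAt K₂ (K₂' t) (Icc (0:ℝ) T) t) ∧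
          ContinuousOn K₂' (Icc (0:ℝ) T) ∧
          (∀ t ∈ Icc (0:ℝ) T, (K₂ t).IsSymm) ∧
          K₂ T = H ∧
          (∀ t ∈ Icc (0:ℝ) T,
            K₂' t + Bᵀ * K₂ t + K₂ t * B - K₂ t * C * N⁻¹ * Cᵀ * K₂ t = 0)) →
        EqOn K K₂ (Icc (0:ℝ) T)) := by
  set S := C * N⁻¹ * Cᵀ
  have hS : S.PosSemidef := by
    simpa [conjTranspose_eq_transpose_of_trivial] using
      hN.inv.posSemidef.mul_mul_conjTranspose_same C
  have hCS (X : Matrix (Fin d) (Fin d) ℝ) : X * C * N⁻¹ * Cᵀ * X = X * S * X := by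
    simp only [S, Matrix.mul_assoc]
  set K := Riccati.solution T B S H
  set K' := fun t => K t * S * K t - Bᵀ * K t - K t * B
  have hK t (ht : t ∈ Icc 0 T) : HasDerivWithinAt K (K' t) (Icc 0 T) t :=
    (Riccati.hasDerivAt_solution T B hS hH ht.2).hasDerivWithinAt
  have hKc : ContinuousOn K (Icc 0 T) := fun t ht => (hK t ht).continuousWithinAt
  have hK' t : K' t + Bᵀ * K t + K t * B - K t * S * K t = 0 := by
    simp only [K']; abel
  refine ⟨K, K', ⟨hK, by fun_prop, fun t ht => ?_, Riccati.solution_self T B,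
    fun t _ => hCS (K t) ▸ hK' t⟩, fun t ht => Riccati.posSemidef_solution T B hS hH ht.2, ?_⟩
  · exact isHermitian_iff_isSymm.mp (Riccati.posSemidef_solution T B hS hH ht.2).isHermitian
  · rintro K₂ K₂' ⟨hK₂, -, -, hK₂T, hK₂'⟩
    exact riccati_eqOn_Icc_of_eq_right Bᵀ B S hK (fun t _ => hK' t) hK₂
      (fun t ht => hCS (K₂ t) ▸ hK₂' t ht) (hK₂T ▸ Riccati.solution_self T B)

/-- Existence, uniqueness, and positive semidefiniteness for the matrix Riccati
terminal-value problem `K' + Bᵀ K + K B − K C N⁻¹ Cᵀ K = 0` on `[0,T]`, `K(T) = H`,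
with `N` symmetric positive definite and `H` symmetric positive semidefinite; solutions
are continuously differentiable symmetric-matrix-valued maps on `[0,T]`. -/
theorem matrix_riccati_existence_uniqueness {d m : ℕ} (T : ℝ) (hT : 0 < T)
    (B : Matrix (Fin d) (Fin d) ℝ) (C : Matrix (Fin d) (Fin m) ℝ)
    (N : Matrix (Fin m) (Fin m) ℝ) (hN : N.PosDef)
    (H : Matrix (Fin d) (Fin d) ℝ) (hH : H.PosSemidef) :
    ∃ (K K' : ℝ → Matrix (Fin d) (Fin d) ℝ),
      ((∀ t ∈ Icc (0:ℝ) T, HasDerivWithinAt K (K' t) (Icc (0:ℝ) T) t) ∧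
        ContinuousOn K' (Icc (0:ℝ) T) ∧
        (∀ t ∈ Icc (0:ℝ) T, (K t).IsSymm) ∧
        K T = H ∧
        (∀ t ∈ Icc (0:ℝ) T,
          K' t + Bᵀ * K t + K t * B - K t * C * N⁻¹ * Cᵀ * K t = 0)) ∧
      (∀ t ∈ Icc (0:ℝ) T, (K t).PosSemidef) ∧
      (∀ K₂ K₂' : ℝ → Matrix (Fin d) (Fin d) ℝ,
        ((∀ t ∈ Icc (0:ℝ) T, HasDerivWithinAt K₂ (K₂' t) (Icc (0:ℝ) T) t) ∧
          ContinuousOn K₂' (Icc (0:ℝ) T) ∧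
          (∀ t ∈ Icc (0:ℝ) T, (K₂ t).IsSymm) ∧
          K₂ T = H ∧
          (∀ t ∈ Icc (0:ℝ) T,
            K₂' t + Bᵀ * K₂ t + K₂ t * B - K₂ t * C * N⁻¹ * Cᵀ * K₂ t = 0)) →
        EqOn K K₂ (Icc (0:ℝ) T)) :=
  matrix_riccati_existence_uniqueness_general T B C N hN H hH
end
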